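/- (Theorem: combinatorial capacity bound for stabilizer codes.) Let p ∈ [0,1] and let (H_t) be a sequence of stabilizer matrices with qubit numbers n_t → ∞ and rates R_t = 1 − rank(H_t)/n_t. Suppose R_t → R and there exist decoders D_t for the quantum erasure channel of probability p whose decoding error probabilities tend to 0 as t → ∞. Then R ≤ 1 − 2p − D(p), where D(p) = limsup_t Δ_t(p) and Δ_t(p) = E_p[rank((H_t)_Ē) − rank((H_t)_E)]/n_t. -/

import Mathlib

open Finset

/-- The symplectic form on `F₂^(Fin n × Fin 2)`. -/
def sympl {n : ℕ} (u v : Fin n × Fin 2 → ZMod 2) : ZMod 2 :=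
  ∑ i : Fin n, (u (i, 0) * v (i, 1) + u (i, 1) * v (i, 0))

/-- A stabilizer matrix: rows are pairwise orthogonal for the symplectic form. -/
def IsStabilizerMatrix {ρ : Type*} {n : ℕ} (H : Matrix ρ (Fin n × Fin 2) (ZMod 2)) : Prop :=
  ∀ a b : ρ, sympl (H a) (H b) = 0

/-- The support of a Pauli error. -/
def psupp {n : ℕ} (w : Fin n × Fin 2 → ZMod 2) : Finset (Fin n) :=
  Finset.univ.filter fun i => ¬(w (i, 0) = 0 ∧ w (i, 1) = 0)

/-- The syndrome of a Pauli error. -/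
def syndrome {ρ : Type*} {n : ℕ} (H : Matrix ρ (Fin n × Fin 2) (ZMod 2))
    (w : Fin n × Fin 2 → ZMod 2) : ρ → ZMod 2 :=
  fun a => sympl (H a) w

/-- The row space `S` of a stabilizer matrix. -/
def rowSpace {ρ : Type*} {n : ℕ} (H : Matrix ρ (Fin n × Fin 2) (ZMod 2)) :
    Submodule (ZMod 2) (Fin n × Fin 2 → ZMod 2) :=
  Submodule.span (ZMod 2) (Set.range fun a => H a)

/-- The matrix `H_E`: columns outside the erasure `E` are replaced by zero
(this does not change the rank, so `(erased H E).rank` is the rank of the submatrix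
of erased columns). -/
def erased {ρ : Type*} {n : ℕ} (H : Matrix ρ (Fin n × Fin 2) (ZMod 2)) (E : Finset (Fin n)) :
    Matrix ρ (Fin n × Fin 2) (ZMod 2) :=
  Matrix.of fun a p => if p.1 ∈ E then H a p else 0

/-- The decoding error probability of a decoder `D` over the quantum erasure channel
of probability `p`. -/
noncomputable def errProb {ρ : Type*} [Fintype ρ] {n : ℕ}
    (H : Matrix ρ (Fin n × Fin 2) (ZMod 2)) (p : ℝ)
    (D : Finset (Fin n) → (ρ → ZMod 2) → ((Fin n × Fin 2 → ZMod 2) ⧸ rowSpace H)) : ℝ :=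
  ∑ E : Finset (Fin n), p ^ E.card * (1 - p) ^ (n - E.card) *
    ((Nat.card {w : Fin n × Fin 2 → ZMod 2 |
        psupp w ⊆ E ∧ D E (syndrome H w) ≠ Submodule.Quotient.mk w} : ℝ) / 4 ^ E.card)

/-- `E_p[rank(H_Ē) − rank(H_E)]`. -/
noncomputable def rankDiffExp {ρ : Type*} [Fintype ρ] {n : ℕ}
    (H : Matrix ρ (Fin n × Fin 2) (ZMod 2)) (p : ℝ) : ℝ :=
  ∑ E : Finset (Fin n), p ^ E.card * (1 - p) ^ (n - E.card) *
    (((erased H Eᶜ).rank : ℝ) - ((erased H E).rank : ℝ))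

/-!
Fix an erasure `E`. Two errors supported on `E` that the decoder both recovers and that have the
same syndrome lie in the same coset of `S`, so they differ by an element of `S ∩ V_E`, where `V_E`
is the space of errors supported on `E`. Syndromes of errors supported on `E` lie in the column
space of `H_E`, and restricting `S` to `Ē` has kernel `S ∩ V_E` and image the row space of `H_Ē`.
Hence at most `2 ^ (rank H_E + rank H - rank H_Ē)` of the `4 ^ |E|` errors are decoded correctly:
when `2|E| + rank H_Ē - rank H - rank H_E` is positive, decoding fails with probability at least
`1/2`, and this gap never exceeds `2n`. Averaging over `E` (with `E_p |E| = n p`) gives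
`Δ(p) ≤ rank H / n - 2p + 4 P_err`, and the bound follows in the limit.
-/

namespace Matrix

variable {m ι K : Type*} [Field K] [Fintype ι]

theorem rank_add_le (A B : Matrix m ι K) : (A + B).rank ≤ A.rank + B.rank := by
  rw [rank, rank, rank, mulVecLin_add]
  exact (Submodule.finrank_mono (LinearMap.range_add_le _ _)).trans
    (Submodule.finrank_add_le_finrank_add_finrank _ _)

theorem natCard_range_mulVecLin [Finite m] [Fintype K] (A : Matrix m ι K) :
    Nat.card (LinearMap.range A.mulVecLin) = Fintype.card K ^ A.rank := by
  have := Fintype.ofFinite (LinearMap.range A.mulVecLin)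
  rw [Nat.card_eq_fintype_card, Module.card_eq_pow_finrank (K := K)]
  rfl

end Matrix

theorem Nat.card_le_card_image_mul_card_of_sub_mem {G Y : Type*} [AddGroup G] [Finite G]
    {T : Set G} (f : G → Y) (W : AddSubgroup G)
    (hfW : ∀ x ∈ T, ∀ y ∈ T, f x = f y → x - y ∈ W) :
    Nat.card T ≤ Nat.card (f '' T) * Nat.card W := by
  obtain ⟨rep, hrep⟩ := (Set.imageFactorization_surjective (f := f) (s := T)).hasRightInverse
  have hrepT (x : T) : f (rep (Set.imageFactorization f T x)) = f x :=
    congrArg Subtype.val (hrep _)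
  let F : T → f '' T × W := fun x =>
    (Set.imageFactorization f T x, ⟨x - rep (Set.imageFactorization f T x),
      hfW _ x.2 _ (rep _).2 (hrepT x).symm⟩)
  have hF : Function.Injective F := by
    intro x y hxy
    simp only [F, Prod.mk.injEq, Subtype.mk.injEq] at hxy
    obtain ⟨h1, h2⟩ := hxy
    rw [h1] at h2
    exact Subtype.ext (sub_left_injective h2)
  simpa only [Nat.card_prod] using Nat.card_le_card_of_injective F hF

open Filter Topology in
theorem Filter.limsup_le_of_eventually_le_of_tendsto {α : Type*} {f : Filter α} [f.NeBot]
    {u v : α → ℝ} {a b : ℝ} (hu : ∀ᶠ x in f, b ≤ u x) (huv : ∀ᶠ x in f, u x ≤ v x)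
    (hv : Tendsto v f (𝓝 a)) : limsup u f ≤ a :=
  hv.limsup_eq ▸ limsup_le_limsup huv (isCoboundedUnder_le_of_eventually_le f hu)
    hv.isBoundedUnder_le

open Module

variable {ρ : Type*} {n : ℕ}

def erasureProb (p : ℝ) (E : Finset (Fin n)) : ℝ := p ^ E.card * (1 - p) ^ (n - E.card)

theorem erasureProb_nonneg {p : ℝ} (hp0 : 0 ≤ p) (hp1 : p ≤ 1) (E : Finset (Fin n)) :
    0 ≤ erasureProb p E :=
  mul_nonneg (pow_nonneg hp0 _) (pow_nonneg (sub_nonneg.mpr hp1) _)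

theorem sum_erasureProb_mul_eq_sum_bernsteinPolynomial (p : ℝ) (f : ℕ → ℝ) :
    ∑ E : Finset (Fin n), erasureProb p E * f E.card =
      ∑ k ∈ range (n + 1), (bernsteinPolynomial ℝ n k).eval p * f k := by
  rw [← Finset.powerset_univ]
  simp only [erasureProb]
  rw [Finset.sum_powerset_apply_card (fun k => p ^ k * (1 - p) ^ (n - k) * f k)]
  simp only [card_univ, Fintype.card_fin, nsmul_eq_mul, bernsteinPolynomial, Polynomial.eval_mul,
    Polynomial.eval_pow, Polynomial.eval_sub, Polynomial.eval_one, Polynomial.eval_natCast,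
    Polynomial.eval_X]
  exact Finset.sum_congr rfl fun k _ => by ring

theorem sum_erasureProb (p : ℝ) : ∑ E : Finset (Fin n), erasureProb p E = 1 := by
  simpa [← Polynomial.eval_finsetSum, bernsteinPolynomial.sum] using
    sum_erasureProb_mul_eq_sum_bernsteinPolynomial (n := n) p fun _ => 1

theorem sum_erasureProb_mul_card (p : ℝ) :
    ∑ E : Finset (Fin n), erasureProb p E * E.card = n * p := by
  have h := congrArg (Polynomial.eval p) (bernsteinPolynomial.sum_smul ℝ n)
  simp only [Polynomial.eval_finsetSum, nsmul_eq_mul, Polynomial.eval_mul,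
    Polynomial.eval_natCast, Polynomial.eval_X] at h
  rw [sum_erasureProb_mul_eq_sum_bernsteinPolynomial, ← h]
  exact Finset.sum_congr rfl fun k _ => mul_comm _ _

def restrictQubits (E : Finset (Fin n)) :
    (Fin n × Fin 2 → ZMod 2) →ₗ[ZMod 2] (Fin n × Fin 2 → ZMod 2) where
  toFun w q := if q.1 ∈ E then w q else 0
  map_add' u v := by ext q; by_cases h : q.1 ∈ E <;> simp [h]
  map_smul' c u := by ext q; by_cases h : q.1 ∈ E <;> simp [h]

@[simp]
theorem restrictQubits_apply (E : Finset (Fin n)) (w : Fin n × Fin 2 → ZMod 2)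
    (q : Fin n × Fin 2) : restrictQubits E w q = if q.1 ∈ E then w q else 0 :=
  rfl

def supportedOn (E : Finset (Fin n)) : Submodule (ZMod 2) (Fin n × Fin 2 → ZMod 2) :=
  LinearMap.ker (restrictQubits Eᶜ)

theorem mem_supportedOn {E : Finset (Fin n)} {w : Fin n × Fin 2 → ZMod 2} :
    w ∈ supportedOn E ↔ psupp w ⊆ E := by
  simp only [supportedOn, LinearMap.mem_ker, restrictQubits_apply, funext_iff, Pi.zero_apply,
    Finset.mem_compl, psupp, Finset.subset_iff, Finset.mem_filter, Finset.mem_univ, true_and,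
    Prod.forall, Fin.forall_fin_two]
  grind

theorem natCard_psupp_subset (E : Finset (Fin n)) :
    Nat.card {w : Fin n × Fin 2 → ZMod 2 | psupp w ⊆ E} = 4 ^ E.card := by
  classical
  have hset : {w : Fin n × Fin 2 → ZMod 2 | psupp w ⊆ E} =
      ↑(Fintype.piFinset fun q : Fin n × Fin 2 =>
        if q.1 ∈ E then (univ : Finset (ZMod 2)) else {0}) := by
    ext w
    simp only [Set.mem_ofPred_eq, Fintype.coe_piFinset, Set.mem_pi, Set.mem_univ, true_implies,
      psupp, Finset.subset_iff, mem_filter, Prod.forall, Fin.forall_fin_two]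
    grind
  rw [hset, Nat.card_coe_set_eq, Set.ncard_coe_finset, Fintype.card_piFinset,
    Fintype.prod_prod_type]
  simp +contextual [apply_ite Finset.card, Finset.prod_ite]

theorem rowSpace_erased (H : Matrix ρ (Fin n × Fin 2) (ZMod 2)) (E : Finset (Fin n)) :
    rowSpace (erased H E) = (rowSpace H).map (restrictQubits E) := by
  rw [rowSpace, rowSpace, Submodule.map_span, ← Set.range_comp]
  rfl

theorem erased_compl (H : Matrix ρ (Fin n × Fin 2) (ZMod 2)) (E : Finset (Fin n)) :
    erased H Eᶜ = H + erased H E := by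
  ext a q
  by_cases hq : q.1 ∈ E <;> simp [erased, hq, CharTwo.add_self_eq_zero]

theorem rank_erased_compl_le (H : Matrix ρ (Fin n × Fin 2) (ZMod 2)) (E : Finset (Fin n)) :
    (erased H Eᶜ).rank ≤ H.rank + (erased H E).rank :=
  erased_compl H E ▸ Matrix.rank_add_le H (erased H E)

theorem finrank_rowSpace [Finite ρ] (H : Matrix ρ (Fin n × Fin 2) (ZMod 2)) :
    finrank (ZMod 2) (rowSpace H) = H.rank :=
  (Matrix.rank_eq_finrank_span_row H).symm

theorem finrank_rowSpace_inf_supportedOn_add_rank_erased_compl [Finite ρ]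
    (H : Matrix ρ (Fin n × Fin 2) (ZMod 2)) (E : Finset (Fin n)) :
    finrank (ZMod 2) ↥(rowSpace H ⊓ supportedOn E) + (erased H Eᶜ).rank = H.rank := by
  set f := (restrictQubits Eᶜ).domRestrict (rowSpace H)
  have hker :
      finrank (ZMod 2) (LinearMap.ker f) = finrank (ZMod 2) ↥(rowSpace H ⊓ supportedOn E) := by
    rw [LinearMap.ker_domRestrict, ← Submodule.finrank_map_subtype_eq, Submodule.map_comap_subtype]
    rfl
  have hrange : finrank (ZMod 2) (LinearMap.range f) = (erased H Eᶜ).rank := by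
    rw [LinearMap.range_domRestrict, ← rowSpace_erased, finrank_rowSpace]
  rw [← hker, ← hrange, add_comm, LinearMap.finrank_range_add_finrank_ker, finrank_rowSpace]

theorem syndrome_erased_of_psupp_subset (H : Matrix ρ (Fin n × Fin 2) (ZMod 2))
    {E : Finset (Fin n)} {w : Fin n × Fin 2 → ZMod 2} (hw : psupp w ⊆ E) :
    syndrome (erased H E) w = syndrome H w := by
  have hw' := mem_supportedOn.mpr hw
  ext a
  simp only [syndrome, sympl]
  refine Finset.sum_congr rfl fun i _ => ?_
  by_cases hi : i ∈ E
  · simp [erased, hi]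
  · have h0 : w (i, 0) = 0 := by simpa [hi] using congrFun hw' (i, 0)
    have h1 : w (i, 1) = 0 := by simpa [hi] using congrFun hw' (i, 1)
    simp [h0, h1]

theorem syndrome_mem_range_mulVecLin (H : Matrix ρ (Fin n × Fin 2) (ZMod 2))
    (w : Fin n × Fin 2 → ZMod 2) :
    syndrome H w ∈ LinearMap.range H.mulVecLin := by
  -- `sympl u w` is the dot product of `u` with `w` after exchanging its `X` and `Z` parts
  refine ⟨fun q => w (q.1, q.2 + 1), ?_⟩
  ext a
  simp only [Matrix.mulVecLin_apply, Matrix.mulVec, dotProduct, Fintype.sum_prod_type,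
    Fin.sum_univ_two, syndrome, sympl]
  rfl

section Decoding

variable (H : Matrix ρ (Fin n × Fin 2) (ZMod 2))
  (D : Finset (Fin n) → (ρ → ZMod 2) → ((Fin n × Fin 2 → ZMod 2) ⧸ rowSpace H))
  (E : Finset (Fin n))

def decodingSuccesses : Set (Fin n × Fin 2 → ZMod 2) :=
  {w | psupp w ⊆ E ∧ D E (syndrome H w) = Submodule.Quotient.mk w}

def decodingFailures : Set (Fin n × Fin 2 → ZMod 2) :=
  {w | psupp w ⊆ E ∧ D E (syndrome H w) ≠ Submodule.Quotient.mk w}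

theorem natCard_decodingFailures_add_natCard_decodingSuccesses :
    Nat.card (decodingFailures H D E) + Nat.card (decodingSuccesses H D E) = 4 ^ E.card := by
  have hunion : decodingFailures H D E ∪ decodingSuccesses H D E = {w | psupp w ⊆ E} := by
    ext w
    simp only [decodingFailures, decodingSuccesses, Set.mem_union, Set.mem_ofPred_eq]
    tauto
  have hdisj : Disjoint (decodingFailures H D E) (decodingSuccesses H D E) :=
    Set.disjoint_left.mpr fun w hf hs => hf.2 hs.2
  rw [← natCard_psupp_subset E, ← hunion, Nat.card_coe_set_eq, Nat.card_coe_set_eq,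
    Nat.card_coe_set_eq, Set.ncard_union_eq hdisj]

theorem natCard_decodingSuccesses_le [Finite ρ] :
    Nat.card (decodingSuccesses H D E)
      ≤ 2 ^ (erased H E).rank * Nat.card ↥(rowSpace H ⊓ supportedOn E) := by
  set T := decodingSuccesses H D E
  have hsyndromes : syndrome H '' T ⊆ LinearMap.range (erased H E).mulVecLin := by
    rintro _ ⟨w, hw, rfl⟩
    rw [← syndrome_erased_of_psupp_subset H hw.1]
    exact syndrome_mem_range_mulVecLin _ w
  have hcard : Nat.card (syndrome H '' T) ≤ 2 ^ (erased H E).rank := by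
    have hrange := Matrix.natCard_range_mulVecLin (erased H E)
    rw [ZMod.card] at hrange
    exact (Nat.card_mono (Set.toFinite _) hsyndromes).trans hrange.le
  have hsub : ∀ w ∈ T, ∀ v ∈ T, syndrome H w = syndrome H v →
      w - v ∈ (rowSpace H ⊓ supportedOn E).toAddSubgroup := by
    rintro w ⟨hwE, hw⟩ v ⟨hvE, hv⟩ hwv
    have hS : w - v ∈ rowSpace H := (Submodule.Quotient.eq _).mp (hw ▸ hv ▸ hwv ▸ rfl)
    exact ⟨hS, sub_mem (mem_supportedOn.mpr hwE) (mem_supportedOn.mpr hvE)⟩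
  exact (Nat.card_le_card_image_mul_card_of_sub_mem _ _ hsub).trans
    (Nat.mul_le_mul_right _ hcard)

theorem natCard_decodingSuccesses_mul_le [Finite ρ] :
    Nat.card (decodingSuccesses H D E) * 2 ^ (erased H Eᶜ).rank
      ≤ 2 ^ ((erased H E).rank + H.rank) := by
  have hW : Nat.card ↥(rowSpace H ⊓ supportedOn E) * 2 ^ (erased H Eᶜ).rank = 2 ^ H.rank := by
    have := Fintype.ofFinite ↥(rowSpace H ⊓ supportedOn E)
    rw [Nat.card_eq_fintype_card, Module.card_eq_pow_finrank (K := ZMod 2), ZMod.card, ← pow_add,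
      finrank_rowSpace_inf_supportedOn_add_rank_erased_compl]
  calc Nat.card (decodingSuccesses H D E) * 2 ^ (erased H Eᶜ).rank
      ≤ 2 ^ (erased H E).rank * Nat.card ↥(rowSpace H ⊓ supportedOn E) *
          2 ^ (erased H Eᶜ).rank :=
        Nat.mul_le_mul_right _ (natCard_decodingSuccesses_le H D E)
    _ = 2 ^ ((erased H E).rank + H.rank) := by rw [mul_assoc, hW, pow_add]

theorem two_mul_natCard_decodingSuccesses_le [Finite ρ]
    (h : (erased H E).rank + H.rank < 2 * E.card + (erased H Eᶜ).rank) :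
    2 * Nat.card (decodingSuccesses H D E) ≤ 4 ^ E.card := by
  refine Nat.le_of_mul_le_mul_right (c := 2 ^ (erased H Eᶜ).rank) ?_ (by positivity)
  calc 2 * Nat.card (decodingSuccesses H D E) * 2 ^ (erased H Eᶜ).rank
      ≤ 2 * 2 ^ ((erased H E).rank + H.rank) := by
        rw [mul_assoc]
        exact Nat.mul_le_mul_left _ (natCard_decodingSuccesses_mul_le H D E)
    _ ≤ 4 ^ E.card * 2 ^ (erased H Eᶜ).rank := by
        rw [← pow_succ', show 4 = 2 ^ 2 by rfl, ← pow_mul, ← pow_add]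
        exact Nat.pow_le_pow_right two_pos h

theorem rank_gap_le_failureRate [Finite ρ] :
    2 * (E.card : ℝ) + (erased H Eᶜ).rank - H.rank - (erased H E).rank ≤
      4 * n * (Nat.card (decodingFailures H D E) / 4 ^ E.card) := by
  have hfail : 0 ≤ (Nat.card (decodingFailures H D E) : ℝ) / 4 ^ E.card := by positivity
  by_cases h : (erased H E).rank + H.rank < 2 * E.card + (erased H Eᶜ).rank
  · have hhalf : (1 : ℝ) / 2 ≤ Nat.card (decodingFailures H D E) / 4 ^ E.card := by
      rw [div_le_div_iff₀ two_pos (by positivity)]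
      have hsum := natCard_decodingFailures_add_natCard_decodingSuccesses H D E
      have hsucc := two_mul_natCard_decodingSuccesses_le H D E h
      have : (4 : ℝ) ^ E.card ≤ 2 * Nat.card (decodingFailures H D E) := by
        exact_mod_cast (by omega : 4 ^ E.card ≤ 2 * Nat.card (decodingFailures H D E))
      linarith
    have hcompl : ((erased H Eᶜ).rank : ℝ) ≤ H.rank + (erased H E).rank := by
      exact_mod_cast rank_erased_compl_le H E
    have hE : (E.card : ℝ) ≤ n := by
      exact_mod_cast (card_le_univ E).trans (Fintype.card_fin n).le
    nlinarith
  · have : (2 * E.card + (erased H Eᶜ).rank : ℝ) ≤ (erased H E).rank + H.rank := by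
      exact_mod_cast not_lt.mp h
    nlinarith

end Decoding

theorem rankDiffExp_le [Fintype ρ] (H : Matrix ρ (Fin n × Fin 2) (ZMod 2))
    (D : Finset (Fin n) → (ρ → ZMod 2) → ((Fin n × Fin 2 → ZMod 2) ⧸ rowSpace H))
    {p : ℝ} (hp0 : 0 ≤ p) (hp1 : p ≤ 1) :
    rankDiffExp H p ≤ H.rank - 2 * n * p + 4 * n * errProb H p D := by
  calc rankDiffExp H p
      = ∑ E, erasureProb p E * ((erased H Eᶜ).rank - (erased H E).rank : ℝ) := rfl
    _ ≤ ∑ E, erasureProb p E * (H.rank - 2 * E.card +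
          4 * n * (Nat.card (decodingFailures H D E) / 4 ^ E.card)) :=
        sum_le_sum fun E _ => mul_le_mul_of_nonneg_left
          (by linarith [rank_gap_le_failureRate H D E]) (erasureProb_nonneg hp0 hp1 E)
    _ = H.rank * ∑ E, erasureProb p E - 2 * ∑ E, erasureProb p E * E.card +
          4 * n * errProb H p D := by
        rw [errProb, mul_sum, mul_sum, mul_sum, ← sum_sub_distrib, ← sum_add_distrib]
        exact sum_congr rfl fun E _ => by rw [erasureProb, decodingFailures]; ring
    _ = H.rank - 2 * n * p + 4 * n * errProb H p D := by
        rw [sum_erasureProb, sum_erasureProb_mul_card]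
        ring

theorem neg_two_mul_le_rankDiffExp [Fintype ρ] (H : Matrix ρ (Fin n × Fin 2) (ZMod 2))
    {p : ℝ} (hp0 : 0 ≤ p) (hp1 : p ≤ 1) :
    -(2 * n : ℝ) ≤ rankDiffExp H p := by
  calc -(2 * n : ℝ) = ∑ E : Finset (Fin n), erasureProb p E * -(2 * n : ℝ) := by
        rw [← sum_mul, sum_erasureProb, one_mul]
    _ ≤ rankDiffExp H p := sum_le_sum fun E _ => by
        refine mul_le_mul_of_nonneg_left ?_ (erasureProb_nonneg hp0 hp1 E)
        have hwidth : ((erased H E).rank : ℝ) ≤ 2 * n := by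
          exact_mod_cast (Matrix.rank_le_card_width (erased H E)).trans (by simp [mul_comm])
        linarith [((erased H Eᶜ).rank.cast_nonneg : (0 : ℝ) ≤ _)]

open Filter in
theorem capacity_bound_for_stabilizer_codes_general
    (p : ℝ) (hp : p ∈ Set.Icc (0 : ℝ) 1)
    (nt rt : ℕ → ℕ) (H : ∀ t, Matrix (Fin (rt t)) (Fin (nt t) × Fin 2) (ZMod 2))
    (hn : Tendsto nt atTop atTop)
    (R : ℝ)
    (hR : Tendsto (fun t => 1 - ((H t).rank : ℝ) / (nt t)) atTop (nhds R))
    (D : ∀ t, Finset (Fin (nt t)) → (Fin (rt t) → ZMod 2) →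
      ((Fin (nt t) × Fin 2 → ZMod 2) ⧸ rowSpace (H t)))
    (hD : Tendsto (fun t => errProb (H t) p (D t)) atTop (nhds 0)) :
    R ≤ 1 - 2 * p - Filter.limsup (fun t => rankDiffExp (H t) p / (nt t)) atTop := by
  obtain ⟨hp0, hp1⟩ := hp
  have hpos : ∀ᶠ t in atTop, (0 : ℝ) < nt t :=
    (hn.eventually_gt_atTop 0).mono fun t ht => Nat.cast_pos.mpr ht
  have hlower : ∀ᶠ t in atTop, -2 ≤ rankDiffExp (H t) p / nt t :=
    hpos.mono fun t ht => by
      rw [le_div_iff₀ ht]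
      linarith [neg_two_mul_le_rankDiffExp (H t) hp0 hp1]
  have hupper : ∀ᶠ t in atTop, rankDiffExp (H t) p / nt t ≤
      (H t).rank / nt t - 2 * p + 4 * errProb (H t) p (D t) :=
    hpos.mono fun t ht => by
      rw [div_le_iff₀ ht, add_mul, sub_mul, div_mul_cancel₀ _ ht.ne']
      linarith [rankDiffExp_le (H t) (D t) hp0 hp1]
  have hlim : Tendsto (fun t => (H t).rank / nt t - 2 * p + 4 * errProb (H t) p (D t)) atTop
      (nhds (1 - R - 2 * p)) := by
    simpa using ((tendsto_const_nhds (x := 1)).sub hR |>.sub_const (2 * p)).add (hD.const_mul 4)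
  linarith [limsup_le_of_eventually_le_of_tendsto hlower hupper hlim]

open Filter in
theorem capacity_bound_for_stabilizer_codes
    (p : ℝ) (hp : p ∈ Set.Icc (0 : ℝ) 1)
    (nt rt : ℕ → ℕ) (H : ∀ t, Matrix (Fin (rt t)) (Fin (nt t) × Fin 2) (ZMod 2))
    (hstab : ∀ t, IsStabilizerMatrix (H t))
    (hn : Tendsto nt atTop atTop)
    (R : ℝ)
    (hR : Tendsto (fun t => 1 - ((H t).rank : ℝ) / (nt t)) atTop (nhds R))
    (D : ∀ t, Finset (Fin (nt t)) → (Fin (rt t) → ZMod 2) →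
      ((Fin (nt t) × Fin 2 → ZMod 2) ⧸ rowSpace (H t)))
    (hD : Tendsto (fun t => errProb (H t) p (D t)) atTop (nhds 0)) :
    R ≤ 1 - 2 * p - Filter.limsup (fun t => rankDiffExp (H t) p / (nt t)) atTop :=
  capacity_bound_for_stabilizer_codes_general p hp nt rt H hn R hR D hD
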